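/- The function ρ̄ is a metric on M_G(X): it is nonnegative, symmetric, satisfies the triangle inequality, and ρ̄(μ,ν) = 0 if and only if μ = ν. -/

import Mathlib

open MeasureTheory Filter Topology Pointwise

/-- A (left) Følner sequence in `G`: a sequence of nonempty finite subsets of `G` with
`|gFₙ Δ Fₙ|/|Fₙ| → 0` for every `g ∈ G`. -/
def IsFolner {G : Type*} [Group G] [DecidableEq G] (F : ℕ → Finset G) : Prop :=
  (∀ n, (F n).Nonempty) ∧
  ∀ g : G, Tendsto (fun n => ((symmDiff (g • F n) (F n)).card : ℝ) / ((F n).card : ℝ))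
    atTop (nhds 0)

/-- A two-sided Følner sequence in `G`: left Følner and `|Fₙg Δ Fₙ|/|Fₙ| → 0` for all `g`. -/
def IsTwoSidedFolner {G : Type*} [Group G] [DecidableEq G] (F : ℕ → Finset G) : Prop :=
  IsFolner F ∧
  ∀ g : G, Tendsto (fun n => ((symmDiff ((F n).image (fun h => h * g)) (F n)).card : ℝ) /
    ((F n).card : ℝ)) atTop (nhds 0)

/-- A tempered Følner sequence: `|⋃_{k ≤ n} Fₖ⁻¹ F_{n+1}| ≤ C|F_{n+1}|` for some `C > 0`. -/
def IsTempered {G : Type*} [Group G] [DecidableEq G] (F : ℕ → Finset G) : Prop :=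
  ∃ C : ℝ, 0 < C ∧ ∀ n : ℕ,
    ((((Finset.range (n+1)).biUnion fun k => (F k)⁻¹ * F (n+1)).card : ℝ)) ≤
      C * ((F (n+1)).card : ℝ)

/-- The upper asymptotic density of `A ⊆ G` along the Følner sequence `F`. -/
noncomputable def upperDensity {G : Type*} [Group G] (F : ℕ → Finset G) (A : Set G) : ℝ :=
  limsup (fun N => (Nat.card ↥(A ∩ (F N : Set G)) : ℝ) / ((F N).card : ℝ)) atTop

section Action

variable (G : Type*) [Group G] (X : Type*) [MetricSpace X] [CompactSpace X]
  [MeasurableSpace X] [BorelSpace X] [MulAction G X]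

/-- A Borel measure on `X` is `G`-invariant. -/
def IsInvariantMeasure (μ : Measure X) : Prop :=
  ∀ g : G, Measure.map (fun x : X => g • x) μ = μ

/-- Ergodicity: every `G`-invariant Borel set has measure `0` or `1`. -/
def IsErgodicMeasure (μ : Measure X) : Prop :=
  ∀ s : Set X, MeasurableSet s → (∀ g : G, (fun x : X => g • x) ⁻¹' s = s) →
    μ s = 0 ∨ μ s = 1

/-- `x` is generic for `μ` along the Følner sequence `F`: the empirical measures
`(1/|Fₙ|) Σ_{f ∈ Fₙ} δ_{f•x}` converge to `μ` in the weak* topology, i.e. the averages of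
every continuous function converge to its integral. -/
def IsGenericPt (F : ℕ → Finset G) (x : X) (μ : Measure X) : Prop :=
  ∀ φ : C(X, ℝ),
    Tendsto (fun n => (∑ f ∈ F n, φ (f • x)) / ((F n).card : ℝ)) atTop
      (nhds (∫ a, φ a ∂μ))

/-- The Besicovitch pseudometric along the Følner sequence `F`. -/
noncomputable def Besicovitch (F : ℕ → Finset G) (x z : X) : ℝ :=
  limsup (fun N => (∑ g ∈ F N, dist (g • x) (g • z)) / ((F N).card : ℝ)) atTop

/-- `lam` is a joining of `μ` and `ν`: a probability measure on `X × X`, invariant under the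
diagonal `G`-action, with marginals `μ` and `ν`. -/
def IsJoining (lam : Measure (X × X)) (μ ν : Measure X) : Prop :=
  IsProbabilityMeasure lam ∧
  lam.map Prod.fst = μ ∧ lam.map Prod.snd = ν ∧
  ∀ g : G, lam.map (fun p : X × X => (g • p.1, g • p.2)) = lam

/-- The distance `ρ̄(μ,ν) = inf_{λ ∈ J(μ,ν)} ∫ d dλ`. -/
noncomputable def rhoBar (μ ν : Measure X) : ℝ :=
  sInf {r : ℝ | ∃ lam : Measure (X × X), IsJoining G X lam μ ν ∧ r = ∫ p, dist p.1 p.2 ∂lam}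

/-- `D̄_{B,F}(x,ν) = inf{D_{B,F}(x,z) : z ∈ Gen_F(ν)}`, with values in `[0,∞]`
(the infimum of the empty set being `∞`). -/
noncomputable def DBarToMeasure (F : ℕ → Finset G) (ν : Measure X) (x : X) : ENNReal :=
  ⨅ z ∈ {z : X | IsGenericPt G X F z ν}, ENNReal.ofReal (Besicovitch G X F x z)

/-- `ω̂_F(x)`: the set of weak* subsequential limits of the empirical measures of `x`
along `F` (the measures for which `x` is quasigeneric along `F`). -/
def omegaHat (F : ℕ → Finset G) (x : X) : Set (ProbabilityMeasure X) :=
  {μ | ∃ k : ℕ → ℕ, StrictMono k ∧ ∀ φ : C(X, ℝ),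
    Tendsto (fun n => (∑ f ∈ F (k n), φ (f • x)) / ((F (k n)).card : ℝ)) atTop
      (nhds (∫ a, φ a ∂(μ : Measure X)))}

/-- `ν` is a joining of the countable family `μs`: a probability measure on `Xᴺ`,
invariant under the coordinatewise `G`-action, whose `m`-th marginal is `μs m`. -/
def IsCountableJoining (ν : Measure (ℕ → X)) (μs : ℕ → Measure X) : Prop :=
  IsProbabilityMeasure ν ∧
  (∀ g : G, ν.map (fun ω : ℕ → X => fun i => g • ω i) = ν) ∧
  ∀ m : ℕ, ν.map (fun ω : ℕ → X => ω m) = μs m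

/-- `(X,G,μ)` is a factor of `(Xᴺ,G,ν)` (with the coordinatewise action on `Xᴺ`). -/
def IsFactorOfProduct (ν : Measure (ℕ → X)) (μ : Measure X) : Prop :=
  ∃ π : (ℕ → X) → X, Measurable π ∧
    (∀ g : G, ∀ᵐ ω ∂ν, π (fun i => g • ω i) = g • π ω) ∧ ν.map π = μ

/-- Ergodicity of a measure on `Xᴺ` with respect to the coordinatewise `G`-action. -/
def IsErgodicProductMeasure (ν : Measure (ℕ → X)) : Prop :=
  ∀ s : Set (ℕ → X), MeasurableSet s →
    (∀ g : G, (fun ω : ℕ → X => fun i => g • ω i) ⁻¹' s = s) → ν s = 0 ∨ ν s = 1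

end Action

/-! Symmetry of `ρ̄` comes from swapping the coordinates of a joining, and `ρ̄(μ, μ) = 0` from the
diagonal joining. For the triangle inequality, joinings of `(η, μ)` and `(η, ν)` are glued along
the common marginal `η`: disintegrating both over the `η`-coordinate and drawing the other two
coordinates conditionally independently gives a measure on `X × X × X` whose last two coordinates
form a joining of `μ` and `ν`. It is invariant because the conditional kernels are a.e.
equivariant, by uniqueness of disintegration. Finally, `|∫ f dμ - ∫ f dν| ≤ K ∫ d dλ` for every
`K`-Lipschitz `f` and every joining `λ`, so `ρ̄(μ, ν) = 0` forces `μ` and `ν` to agree on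
Lipschitz functions, hence on closed sets through thickened indicators. -/

open ProbabilityTheory
open scoped NNReal BoundedContinuousFunction

namespace MeasureTheory

theorem ext_of_forall_integral_eq_of_lipschitzWith {Ω : Type*} [PseudoEMetricSpace Ω]
    [MeasurableSpace Ω] [BorelSpace Ω] {μ ν : Measure Ω} [IsFiniteMeasure μ] [IsFiniteMeasure ν]
    (h : ∀ (f : Ω →ᵇ ℝ) (K : ℝ≥0), LipschitzWith K f → ∫ x, f x ∂μ = ∫ x, f x ∂ν) :
    μ = ν := by
  have hclosed : ∀ F : Set Ω, IsClosed F → μ F = ν F := by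
    intro F hF
    have hδ : ∀ n : ℕ, 0 < 1 / ((n : ℝ) + 1) := fun n => Nat.one_div_pos_of_nat
    have hlim := tendsto_one_div_add_atTop_nhds_zero_nat (𝕜 := ℝ)
    have hlip : LipschitzWith 1 ((↑) : ℝ≥0 → ℝ) := NNReal.isometry_coe.lipschitz
    have heq : ∀ n, ∫ x, (thickenedIndicator (hδ n) F x : ℝ) ∂μ
        = ∫ x, (thickenedIndicator (hδ n) F x : ℝ) ∂ν := fun n =>
      h ((thickenedIndicator (hδ n) F).comp _ hlip) _
        (hlip.comp (lipschitzWith_thickenedIndicator (hδ n) F))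
    have hμ := tendsto_integral_thickenedIndicator_of_isClosed μ hF hδ hlim
    have hν := tendsto_integral_thickenedIndicator_of_isClosed ν hF hδ hlim
    simp_rw [heq] at hμ
    exact (ENNReal.toReal_eq_toReal_iff' (measure_ne_top μ F) (measure_ne_top ν F)).mp
      (tendsto_nhds_unique hμ hν)
  refine ext_of_generate_finite _ ?_ isPiSystem_isClosed hclosed (hclosed _ isClosed_univ)
  rw [BorelSpace.measurable_eq (α := Ω), borel_eq_generateFrom_isClosed]

end MeasureTheory

namespace MeasureTheory.Measure

variable {α Ω β : Type*} {mα : MeasurableSpace α} {mΩ : MeasurableSpace Ω} {mβ : MeasurableSpace β}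

lemma map_prodMap_compProd (μ : Measure α) [SFinite μ] (κ : Kernel α Ω) [IsSFiniteKernel κ]
    (e : α ≃ᵐ α) {f : Ω → β} (hf : Measurable f) :
    (μ ⊗ₘ κ).map (Prod.map e f) = μ.map e ⊗ₘ (κ.comap e.symm e.symm.measurable).map f := by
  ext s hs
  rw [map_apply (e.measurable.prodMap hf) hs, compProd_apply (e.measurable.prodMap hf hs),
    compProd_apply hs, lintegral_map (Kernel.measurable_kernel_prodMk_left hs) e.measurable]
  refine lintegral_congr fun a => ?_
  rw [Kernel.map_apply _ hf, Kernel.comap_apply, e.symm_apply_apply,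
    map_apply hf (measurable_prodMk_left hs)]
  rfl

variable [StandardBorelSpace Ω] [Nonempty Ω]

lemma condKernel_map_ae_eq_of_map_prodMap_eq (ρ : Measure (α × Ω)) [IsFiniteMeasure ρ]
    (e : α ≃ᵐ α) {f : Ω → Ω} (hf : Measurable f) (he : ρ.fst.map e = ρ.fst)
    (hρ : ρ.map (Prod.map e f) = ρ) :
    ∀ᵐ a ∂ρ.fst, (ρ.condKernel (e.symm a)).map f = ρ.condKernel a := by
  have hdis : ρ = ρ.fst ⊗ₘ (ρ.condKernel.comap e.symm e.symm.measurable).map f :=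
    calc ρ = ρ.map (Prod.map e f) := hρ.symm
      _ = (ρ.fst ⊗ₘ ρ.condKernel).map (Prod.map e f) := by rw [ρ.disintegrate ρ.condKernel]
      _ = _ := by rw [map_prodMap_compProd _ _ _ hf, he]
  filter_upwards [eq_condKernel_of_measure_eq_compProd _ hdis] with a ha
  rwa [Kernel.map_apply _ hf, Kernel.comap_apply] at ha

noncomputable def relIndepProd (ρ₁ ρ₂ : Measure (α × Ω)) [IsFiniteMeasure ρ₁]
    [IsFiniteMeasure ρ₂] : Measure (α × Ω × Ω) :=
  ρ₁.fst ⊗ₘ (ρ₁.condKernel ×ₖ ρ₂.condKernel)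

variable (ρ₁ ρ₂ : Measure (α × Ω)) [IsFiniteMeasure ρ₁] [IsFiniteMeasure ρ₂]

instance [IsProbabilityMeasure ρ₁] : IsProbabilityMeasure (ρ₁.relIndepProd ρ₂) := by
  rw [relIndepProd]; infer_instance

lemma relIndepProd_map_fst : (ρ₁.relIndepProd ρ₂).map (Prod.map id Prod.fst) = ρ₁ := by
  rw [relIndepProd, ← compProd_map measurable_fst, ← Kernel.fst_eq, Kernel.fst_prod]
  exact ρ₁.disintegrate _

lemma relIndepProd_map_snd (h : ρ₂.fst = ρ₁.fst) :
    (ρ₁.relIndepProd ρ₂).map (Prod.map id Prod.snd) = ρ₂ := by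
  rw [relIndepProd, ← compProd_map measurable_snd, ← Kernel.snd_eq, Kernel.snd_prod, ← h]
  exact ρ₂.disintegrate _

lemma map_prodMap_relIndepProd {e : α ≃ᵐ α} {f : Ω → Ω} (hf : Measurable f)
    (h : ρ₂.fst = ρ₁.fst) (he : ρ₁.fst.map e = ρ₁.fst)
    (h₁ : ρ₁.map (Prod.map e f) = ρ₁) (h₂ : ρ₂.map (Prod.map e f) = ρ₂) :
    (ρ₁.relIndepProd ρ₂).map (Prod.map e (Prod.map f f)) = ρ₁.relIndepProd ρ₂ := by
  rw [relIndepProd, map_prodMap_compProd _ _ _ (hf.prodMap hf), he]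
  refine compProd_congr ?_
  filter_upwards [condKernel_map_ae_eq_of_map_prodMap_eq ρ₁ e hf he h₁,
    h ▸ condKernel_map_ae_eq_of_map_prodMap_eq ρ₂ e hf (h ▸ he) h₂] with a ha₁ ha₂
  rw [Kernel.map_apply _ (hf.prodMap hf), Kernel.comap_apply, Kernel.prod_apply,
    Kernel.prod_apply, ← map_prod_map _ _ hf hf, ha₁, ha₂]

end MeasureTheory.Measure

section Joinings

open Measure

variable {G X : Type*} [Group G] [MulAction G X] [MeasurableSpace X] [MeasurableConstSMul G X]
  {μ ν η : Measure X} {lam lam₁ lam₂ : Measure (X × X)}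

lemma measurable_smul_prodMap_smul (g : G) : Measurable fun p : X × X => (g • p.1, g • p.2) :=
  (measurable_const_smul g).prodMap (measurable_const_smul g)

lemma IsJoining.isInvariantMeasure_right (h : IsJoining G X lam μ ν) :
    IsInvariantMeasure G X ν := by
  intro g
  obtain ⟨-, -, rfl, hinv⟩ := h
  conv_rhs => rw [← hinv g]
  rw [map_map (measurable_const_smul g) measurable_snd,
    map_map measurable_snd (measurable_smul_prodMap_smul g)]
  rfl

lemma IsJoining.swap (h : IsJoining G X lam μ ν) : IsJoining G X (lam.map Prod.swap) ν μ := by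
  obtain ⟨hprob, rfl, rfl, hinv⟩ := h
  refine ⟨isProbabilityMeasure_map measurable_swap.aemeasurable, ?_, ?_, fun g => ?_⟩
  · rw [map_map measurable_fst measurable_swap]; rfl
  · rw [map_map measurable_snd measurable_swap]; rfl
  · rw [map_map (measurable_smul_prodMap_smul g) measurable_swap]
    conv_rhs => rw [← hinv g, map_map measurable_swap (measurable_smul_prodMap_smul g)]
    rfl

lemma IsJoining.isInvariantMeasure_left (h : IsJoining G X lam μ ν) :
    IsInvariantMeasure G X μ :=
  h.swap.isInvariantMeasure_right

lemma isJoining_prod [IsProbabilityMeasure μ] [IsProbabilityMeasure ν]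
    (hμ : IsInvariantMeasure G X μ) (hν : IsInvariantMeasure G X ν) :
    IsJoining G X (μ.prod ν) μ ν :=
  ⟨inferInstance, by simp, by simp, fun g => by
    change (μ.prod ν).map (Prod.map (g • ·) (g • ·)) = _
    rw [← map_prod_map _ _ (measurable_const_smul g) (measurable_const_smul g), hμ g, hν g]⟩

lemma isJoining_map_diag [IsProbabilityMeasure μ] (hμ : IsInvariantMeasure G X μ) :
    IsJoining G X (μ.map fun x => (x, x)) μ μ := by
  have hdiag : Measurable fun x : X => (x, x) := measurable_id.prodMk measurable_id
  refine ⟨isProbabilityMeasure_map hdiag.aemeasurable, ?_, ?_, fun g => ?_⟩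
  · rw [map_map measurable_fst hdiag]; exact map_id
  · rw [map_map measurable_snd hdiag]; exact map_id
  · rw [map_map (measurable_smul_prodMap_smul g) hdiag]
    conv_rhs => rw [← hμ g, map_map hdiag (measurable_const_smul g)]
    rfl

variable [StandardBorelSpace X] [Nonempty X]

lemma IsJoining.relIndepProd_snd {ρ₁ ρ₂ : Measure (X × X)} [IsProbabilityMeasure ρ₁]
    [IsProbabilityMeasure ρ₂] (h₁ : IsJoining G X ρ₁ η μ) (h₂ : IsJoining G X ρ₂ η ν) :
    IsJoining G X (ρ₁.relIndepProd ρ₂).snd μ ν := by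
  have hfst : ρ₂.fst = ρ₁.fst := h₂.2.1.trans h₁.2.1.symm
  refine ⟨inferInstance, ?_, ?_, fun g => ?_⟩
  · calc (ρ₁.relIndepProd ρ₂).snd.map Prod.fst
          = ((ρ₁.relIndepProd ρ₂).map (Prod.map id Prod.fst)).map Prod.snd := by
            rw [Measure.snd, map_map measurable_fst measurable_snd,
              map_map measurable_snd (measurable_id.prodMap measurable_fst)]
            rfl
        _ = μ := by rw [relIndepProd_map_fst, h₁.2.2.1]
  · calc (ρ₁.relIndepProd ρ₂).snd.map Prod.snd
          = ((ρ₁.relIndepProd ρ₂).map (Prod.map id Prod.snd)).map Prod.snd := by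
            rw [Measure.snd, map_map measurable_snd measurable_snd,
              map_map measurable_snd (measurable_id.prodMap measurable_snd)]
            rfl
        _ = ν := by rw [relIndepProd_map_snd _ _ hfst, h₂.2.2.1]
  · have he : ρ₁.fst.map (MeasurableEquiv.smul g) = ρ₁.fst := by
      rw [MeasurableEquiv.smul_apply, Measure.fst, h₁.2.1]
      exact h₁.isInvariantMeasure_left g
    have hξ := map_prodMap_relIndepProd ρ₁ ρ₂ (measurable_const_smul g) hfst he
      (h₁.2.2.2 g) (h₂.2.2.2 g)
    rw [Measure.snd, map_map (measurable_smul_prodMap_smul g) measurable_snd]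
    conv_rhs => rw [← hξ, map_map measurable_snd (by fun_prop)]
    rfl

end Joinings

section Metric

open Measure

variable {X : Type*} [PseudoMetricSpace X] [MeasurableSpace X]

lemma integral_dist_map_swap (lam : Measure (X × X)) :
    ∫ p, dist p.1 p.2 ∂lam.map Prod.swap = ∫ p, dist p.1 p.2 ∂lam := by
  change ∫ p, dist p.1 p.2 ∂lam.map MeasurableEquiv.prodComm = _
  rw [integral_map_equiv]
  exact integral_congr_ae (ae_of_all _ fun p => dist_comm _ _)

variable [CompactSpace X] [BorelSpace X]

lemma abs_integral_map_fst_sub_integral_map_snd_le (lam : Measure (X × X)) [IsFiniteMeasure lam]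
    {f : X → ℝ} {K : ℝ≥0} (hf : LipschitzWith K f) :
    |∫ x, f x ∂lam.map Prod.fst - ∫ x, f x ∂lam.map Prod.snd| ≤ K * ∫ p, dist p.1 p.2 ∂lam := by
  have hint {g : X × X → ℝ} (hg : Continuous g) : Integrable g lam :=
    hg.integrable_of_hasCompactSupport (.of_compactSpace g)
  have hfc := hf.continuous
  rw [integral_map measurable_fst.aemeasurable hfc.aestronglyMeasurable,
    integral_map measurable_snd.aemeasurable hfc.aestronglyMeasurable,
    ← integral_sub (hint (by fun_prop)) (hint (by fun_prop)), ← integral_const_mul]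
  refine abs_integral_le_integral_abs.trans
    (integral_mono (hint (by fun_prop)).abs (hint (by fun_prop)) fun p => ?_)
  simpa only [Real.dist_eq] using hf.dist_le_mul p.1 p.2

lemma integral_dist_relIndepProd_snd_le [StandardBorelSpace X] [Nonempty X]
    (ρ₁ ρ₂ : Measure (X × X)) [IsProbabilityMeasure ρ₁] [IsProbabilityMeasure ρ₂]
    (h : ρ₂.fst = ρ₁.fst) :
    ∫ p, dist p.1 p.2 ∂(ρ₁.relIndepProd ρ₂).snd ≤
      ∫ p, dist p.1 p.2 ∂ρ₁ + ∫ p, dist p.1 p.2 ∂ρ₂ := by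
  set ξ := ρ₁.relIndepProd ρ₂
  have hint {f : X × X × X → ℝ} (hf : Continuous f) : Integrable f ξ :=
    hf.integrable_of_hasCompactSupport (.of_compactSpace f)
  have hdist : Continuous fun p : X × X => dist p.1 p.2 := by fun_prop
  have hmarg₁ : ∫ t, dist t.1 t.2.1 ∂ξ = ∫ p, dist p.1 p.2 ∂ρ₁ := by
    conv_rhs => rw [← relIndepProd_map_fst ρ₁ ρ₂]
    exact (integral_map (measurable_id.prodMap measurable_fst).aemeasurable
      hdist.aestronglyMeasurable).symm
  have hmarg₂ : ∫ t, dist t.1 t.2.2 ∂ξ = ∫ p, dist p.1 p.2 ∂ρ₂ := by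
    conv_rhs => rw [← relIndepProd_map_snd ρ₁ ρ₂ h]
    exact (integral_map (measurable_id.prodMap measurable_snd).aemeasurable
      hdist.aestronglyMeasurable).symm
  calc ∫ p, dist p.1 p.2 ∂ξ.snd = ∫ t, dist t.2.1 t.2.2 ∂ξ :=
            integral_map measurable_snd.aemeasurable hdist.aestronglyMeasurable
    _ ≤ ∫ t, (dist t.1 t.2.1 + dist t.1 t.2.2) ∂ξ :=
        integral_mono (hint (by fun_prop)) (hint (by fun_prop))
          fun t => dist_triangle_left _ _ t.1
    _ = _ := by rw [integral_add (hint (by fun_prop)) (hint (by fun_prop)), hmarg₁, hmarg₂]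

end Metric

section RhoBar

open Measure

variable {G X : Type*} [Group G] [MulAction G X] [MetricSpace X] [MeasurableSpace X]
  {μ ν η : Measure X} {lam : Measure (X × X)}

lemma rhoBar_nonneg : 0 ≤ rhoBar G X μ ν :=
  Real.sInf_nonneg <| by rintro _ ⟨lam, -, rfl⟩; exact integral_nonneg fun _ => dist_nonneg

lemma rhoBar_le_integral (h : IsJoining G X lam μ ν) :
    rhoBar G X μ ν ≤ ∫ p, dist p.1 p.2 ∂lam :=
  csInf_le ⟨0, by rintro _ ⟨lam, -, rfl⟩; exact integral_nonneg fun _ => dist_nonneg⟩ ⟨lam, h, rfl⟩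

lemma exists_isJoining_integral_lt (hne : ∃ lam, IsJoining G X lam μ ν) {r : ℝ}
    (h : rhoBar G X μ ν < r) : ∃ lam, IsJoining G X lam μ ν ∧ ∫ p, dist p.1 p.2 ∂lam < r := by
  obtain ⟨lam₀, h₀⟩ := hne
  obtain ⟨_, ⟨lam, hlam, rfl⟩, hlt⟩ := exists_lt_of_csInf_lt (by exact ⟨_, lam₀, h₀, rfl⟩) h
  exact ⟨lam, hlam, hlt⟩

lemma eq_of_rhoBar_eq_zero [CompactSpace X] [BorelSpace X] (hne : ∃ lam, IsJoining G X lam μ ν)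
    (h : rhoBar G X μ ν = 0) : μ = ν := by
  obtain ⟨lam₀, h₀⟩ := hne
  have := h₀.1
  have : IsProbabilityMeasure μ := h₀.2.1 ▸ isProbabilityMeasure_map measurable_fst.aemeasurable
  have : IsProbabilityMeasure ν := h₀.2.2.1 ▸ isProbabilityMeasure_map measurable_snd.aemeasurable
  refine ext_of_forall_integral_eq_of_lipschitzWith fun f K hf => ?_
  refine sub_eq_zero.mp (abs_nonpos_iff.mp (le_of_forall_pos_le_add fun ε hε => ?_))
  obtain ⟨lam, hlam, hlt⟩ := exists_isJoining_integral_lt ⟨_, h₀⟩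
    (show rhoBar G X μ ν < ε / (K + 1) by rw [h]; positivity)
  have := hlam.1
  calc |∫ x, f x ∂μ - ∫ x, f x ∂ν|
      = |∫ x, f x ∂lam.map Prod.fst - ∫ x, f x ∂lam.map Prod.snd| := by
        rw [hlam.2.1, hlam.2.2.1]
    _ ≤ K * ∫ p, dist p.1 p.2 ∂lam := abs_integral_map_fst_sub_integral_map_snd_le lam hf
    _ ≤ (K + 1) * (ε / (K + 1)) := by gcongr; linarith
    _ = 0 + ε := by rw [zero_add]; field_simp

variable [MeasurableConstSMul G X]

lemma rhoBar_comm : rhoBar G X μ ν = rhoBar G X ν μ := by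
  unfold rhoBar
  congr 1
  ext r
  constructor <;>
    rintro ⟨lam, h, rfl⟩ <;> exact ⟨_, h.swap, (integral_dist_map_swap lam).symm⟩

lemma rhoBar_self [SecondCountableTopology X] [OpensMeasurableSpace X] [IsProbabilityMeasure μ]
    (hμ : IsInvariantMeasure G X μ) : rhoBar G X μ μ = 0 := by
  refine le_antisymm ((rhoBar_le_integral (isJoining_map_diag hμ)).trans_eq ?_) rhoBar_nonneg
  rw [integral_map (by fun_prop) (by fun_prop)]
  simp

lemma rhoBar_le_add [CompactSpace X] [BorelSpace X] [Nonempty X]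
    (h₁ : ∃ lam, IsJoining G X lam μ η) (h₂ : ∃ lam, IsJoining G X lam η ν) :
    rhoBar G X μ ν ≤ rhoBar G X μ η + rhoBar G X η ν := by
  refine le_of_forall_pos_lt_add fun ε hε => ?_
  obtain ⟨lam₁, hlam₁, hlt₁⟩ :=
    exists_isJoining_integral_lt h₁ (lt_add_of_pos_right _ (half_pos hε))
  obtain ⟨lam₂, hlam₂, hlt₂⟩ :=
    exists_isJoining_integral_lt h₂ (lt_add_of_pos_right _ (half_pos hε))
  have := hlam₁.swap.1
  have := hlam₂.1
  have hfst : lam₂.fst = (lam₁.map Prod.swap).fst := by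
    rw [fst_map_swap]; exact hlam₂.2.1.trans hlam₁.2.2.1.symm
  calc rhoBar G X μ ν ≤ ∫ p, dist p.1 p.2 ∂((lam₁.map Prod.swap).relIndepProd lam₂).snd :=
        rhoBar_le_integral (hlam₁.swap.relIndepProd_snd hlam₂)
    _ ≤ ∫ p, dist p.1 p.2 ∂lam₁ + ∫ p, dist p.1 p.2 ∂lam₂ := by
        simpa only [integral_dist_map_swap] using integral_dist_relIndepProd_snd_le _ _ hfst
    _ < _ := by linarith

end RhoBar

theorem stmt3_general {G : Type*} [Group G]
    {X : Type*} [MetricSpace X] [CompactSpace X] [MeasurableSpace X] [BorelSpace X]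
    [MulAction G X] (hact : ∀ g : G, Continuous fun x : X => g • x) :
    ∀ μ ν η : Measure X, IsProbabilityMeasure μ → IsProbabilityMeasure ν →
      IsProbabilityMeasure η → IsInvariantMeasure G X μ → IsInvariantMeasure G X ν →
      IsInvariantMeasure G X η →
      0 ≤ rhoBar G X μ ν ∧
      rhoBar G X μ ν = rhoBar G X ν μ ∧
      rhoBar G X μ ν ≤ rhoBar G X μ η + rhoBar G X η ν ∧
      (rhoBar G X μ ν = 0 ↔ μ = ν) := by
  intro μ ν η _ _ _ hμ hν hη
  have : ContinuousConstSMul G X := ⟨hact⟩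
  have : Nonempty X := μ.nonempty_of_neZero
  exact ⟨rhoBar_nonneg, rhoBar_comm,
    rhoBar_le_add ⟨_, isJoining_prod hμ hη⟩ ⟨_, isJoining_prod hη hν⟩,
    eq_of_rhoBar_eq_zero ⟨_, isJoining_prod hμ hν⟩, fun h => h ▸ rhoBar_self hμ⟩

/-- `ρ̄` is a metric on `M_G(X)`: nonnegative, symmetric, triangle inequality,
and vanishing exactly on the diagonal. -/
theorem stmt3 {G : Type*} [Group G] [Countable G] [DecidableEq G]
    {X : Type*} [MetricSpace X] [CompactSpace X] [MeasurableSpace X] [BorelSpace X]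
    [MulAction G X] (hact : ∀ g : G, Continuous fun x : X => g • x) :
    ∀ μ ν η : Measure X, IsProbabilityMeasure μ → IsProbabilityMeasure ν →
      IsProbabilityMeasure η → IsInvariantMeasure G X μ → IsInvariantMeasure G X ν →
      IsInvariantMeasure G X η →
      0 ≤ rhoBar G X μ ν ∧
      rhoBar G X μ ν = rhoBar G X ν μ ∧
      rhoBar G X μ ν ≤ rhoBar G X μ η + rhoBar G X η ν ∧
      (rhoBar G X μ ν = 0 ↔ μ = ν) :=
  stmt3_general hact
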